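/- For all real a > 0 and t > 0, ∫_0^t (1/√(π τ)) e^{-a²/(4τ)} dτ = 2√(t/π) e^{-a²/(4t)} - a · Erfc(a / (2√t)). -/

import Mathlib

open Real MeasureTheory

/-- Complementary error function Erfc(x) := (2/√π) ∫_x^∞ e^{-u²} du. -/
noncomputable def Erfc (x : ℝ) : ℝ :=
  (2 / Real.sqrt Real.pi) * ∫ u in Set.Ioi x, Real.exp (-u ^ 2)

/-!
The right-hand side, as a function `T` of `t`, is an antiderivative of the integrand on `(0, ∞)`:
since `Erfc' x = -(2/√π) e^{-x²}` and `(a/(2√τ))² = a²/(4τ)`, differentiating `a Erfc (a/(2√τ))`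
exactly cancels the term produced by the exponential in `2√(τ/π) e^{-a²/(4τ)}`. Both terms of `T`
vanish as `τ → 0⁺`, the second because `a > 0` sends `a/(2√τ)` to `+∞`. The integrand is
nonnegative, so the fundamental theorem of calculus applies on `(0, t]` with no separate
integrability argument.
-/

open Set Filter Topology

theorem hasDerivAt_integral_Ioi {E : Type*} [NormedAddCommGroup E] [NormedSpace ℝ E]
    [CompleteSpace E] {f : ℝ → E} (hf : Integrable f) (hc : Continuous f) (x : ℝ) :
    HasDerivAt (fun y => ∫ u in Ioi y, f u) (-f x) x := by
  have hsplit : (fun y => ∫ u in Ioi y, f u) =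
      fun y => (∫ u in Ioi 0, f u) - ∫ u in 0..y, f u := by
    funext y
    exact eq_sub_of_add_eq'
      (intervalIntegral.integral_interval_add_Ioi hf.integrableOn hf.integrableOn)
  rw [hsplit]
  exact (intervalIntegral.integral_hasDerivAt_right (hc.intervalIntegrable 0 x)
    hc.aestronglyMeasurable.stronglyMeasurableAtFilter hc.continuousAt).const_sub _

theorem integral_eq_sub_of_hasDerivAt_of_tendsto_of_nonneg {f f' : ℝ → ℝ} {a b fa fb : ℝ}
    (hab : a < b) (hderiv : ∀ x ∈ Ioo a b, HasDerivAt f (f' x) x)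
    (hpos : ∀ x ∈ Ioo a b, 0 ≤ f' x)
    (ha : Tendsto f (𝓝[>] a) (𝓝 fa)) (hb : Tendsto f (𝓝[<] b) (𝓝 fb)) :
    ∫ y in a..b, f' y = fb - fa := by
  set F : ℝ → ℝ := Function.update (Function.update f a fa) b fb
  have hFderiv : ∀ x ∈ Ioo a b, HasDerivAt F (f' x) x := by
    refine fun x hx => (hderiv x hx).congr_of_eventuallyEq ?_
    filter_upwards [Ioo_mem_nhds hx.1 hx.2] with y hy
    simp only [F, Function.update_of_ne hy.2.ne, Function.update_of_ne hy.1.ne']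
  have hFcont : ContinuousOn F (Icc a b) := by
    rw [continuousOn_update_iff, continuousOn_update_iff, Icc_sdiff_right, Ico_sdiff_left]
    refine ⟨⟨fun z hz => (hderiv z hz).continuousAt.continuousWithinAt, ?_⟩, ?_⟩
    · exact fun _ => ha.mono_left (nhdsWithin_mono _ Ioo_subset_Ioi_self)
    · rintro -
      refine (hb.congr' ?_).mono_left (nhdsWithin_mono _ Ico_subset_Iio_self)
      filter_upwards [Ioo_mem_nhdsLT hab] with z hz
      exact (Function.update_of_ne hz.1.ne' _ _).symm
  have hint : IntervalIntegrable f' volume a b :=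
    (intervalIntegrable_iff_integrableOn_Ioc_of_le hab.le).2
      (intervalIntegral.integrableOn_deriv_of_nonneg hFcont hFderiv hpos)
  exact intervalIntegral.integral_eq_sub_of_hasDerivAt_of_tendsto hab hderiv hint ha hb

theorem hasDerivAt_Erfc (x : ℝ) : HasDerivAt Erfc (-(2 / √π) * exp (-x ^ 2)) x := by
  have hgauss : Integrable fun u : ℝ => exp (-u ^ 2) := by
    simpa using integrable_exp_neg_mul_sq one_pos
  exact ((hasDerivAt_integral_Ioi hgauss (by fun_prop) x).const_mul (2 / √π)).congr_deriv
    (by ring)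

theorem tendsto_Erfc_atTop : Tendsto Erfc atTop (𝓝 0) := by
  unfold Erfc
  simpa using (tendsto_integral_Ioi_zero tendsto_id).const_mul (2 / √π)

noncomputable def stepKernel (a τ : ℝ) : ℝ :=
  2 * √(τ / π) * exp (-a ^ 2 / (4 * τ)) - a * Erfc (a / (2 * √τ))

theorem hasDerivAt_stepKernel (a : ℝ) {τ : ℝ} (hτ : 0 < τ) :
    HasDerivAt (stepKernel a) (1 / √(π * τ) * exp (-a ^ 2 / (4 * τ))) τ := by
  have hsqrt : HasDerivAt (fun τ => √τ) (1 / (2 * √τ)) τ := hasDerivAt_sqrt hτ.ne'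
  have hprefactor : HasDerivAt (fun τ => 2 * √(τ / π)) (1 / √(π * τ)) τ := by
    refine ((((hasDerivAt_id' τ).div_const π).sqrt (by positivity)).const_mul 2).congr_deriv ?_
    rw [sqrt_div hτ.le, sqrt_mul pi_pos.le]
    field_simp
    rw [sq_sqrt pi_pos.le]
  have hexponent : HasDerivAt (fun τ => -a ^ 2 / (4 * τ)) (a ^ 2 / (4 * τ ^ 2)) τ := by
    refine ((hasDerivAt_const τ (-a ^ 2)).fun_div ((hasDerivAt_id' τ).const_mul 4)
      (by positivity)).congr_deriv ?_
    field_simp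
    ring
  have hinner : HasDerivAt (fun τ => a / (2 * √τ)) (-a / (4 * τ * √τ)) τ := by
    refine ((hasDerivAt_const τ a).fun_div (hsqrt.const_mul 2) (by positivity)).congr_deriv ?_
    field_simp
    rw [sq_sqrt hτ.le]
    ring
  have hsq : -(a / (2 * √τ)) ^ 2 = -a ^ 2 / (4 * τ) := by
    rw [div_pow, mul_pow, sq_sqrt hτ.le, neg_div]
    norm_num
  have h := (hprefactor.mul hexponent.exp).sub (((hasDerivAt_Erfc _).comp τ hinner).const_mul a)
  rw [hsq] at h
  refine h.congr_deriv ?_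
  rw [sqrt_div hτ.le, sqrt_mul pi_pos.le]
  field_simp
  rw [sq_sqrt hτ.le]
  ring

theorem tendsto_stepKernel_nhdsGT_zero {a : ℝ} (ha : 0 < a) :
    Tendsto (stepKernel a) (𝓝[>] 0) (𝓝 0) := by
  have hprefactor : Tendsto (fun τ => 2 * √(τ / π)) (𝓝[>] 0) (𝓝 0) := by
    simpa using ((by fun_prop : Continuous fun τ => 2 * √(τ / π)).tendsto 0).mono_left
      nhdsWithin_le_nhds
  have hexp : Tendsto (fun τ => exp (-a ^ 2 / (4 * τ))) (𝓝[>] 0) (𝓝 0) := by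
    refine tendsto_exp_atBot.comp <| (tendsto_inv_nhdsGT_zero.const_mul_atTop_of_neg
      (by nlinarith : -a ^ 2 / 4 < 0)).congr fun τ => ?_
    ring
  have hroot : Tendsto (fun τ => √τ) (𝓝[>] 0) (𝓝[>] 0) :=
    tendsto_nhdsWithin_of_tendsto_nhds_of_eventually_within _
      (by simpa using (continuous_sqrt.tendsto 0).mono_left nhdsWithin_le_nhds)
      (eventually_nhdsWithin_of_forall fun τ hτ => sqrt_pos.2 hτ)
  have hErfc : Tendsto (fun τ => Erfc (a / (2 * √τ))) (𝓝[>] 0) (𝓝 0) := by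
    refine tendsto_Erfc_atTop.comp <| (hroot.inv_tendsto_nhdsGT_zero.const_mul_atTop
      (by positivity : 0 < a / 2)).congr fun τ => ?_
    simp only [Pi.inv_apply]
    ring
  have h := (hprefactor.mul hexp).sub (hErfc.const_mul a)
  rwa [mul_zero, mul_zero, sub_zero] at h

/-- For a > 0 and t > 0,
∫_0^t (1/√(πτ)) e^{-a²/(4τ)} dτ = 2√(t/π) e^{-a²/(4t)} - a Erfc(a/(2√t)). -/
theorem stmt_11 (a t : ℝ) (ha : 0 < a) (ht : 0 < t) :
    ∫ τ in (0 : ℝ)..t,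
        (1 / Real.sqrt (Real.pi * τ)) * Real.exp (-a ^ 2 / (4 * τ))
      = 2 * Real.sqrt (t / Real.pi) * Real.exp (-a ^ 2 / (4 * t))
        - a * Erfc (a / (2 * Real.sqrt t)) := by
  rw [integral_eq_sub_of_hasDerivAt_of_tendsto_of_nonneg ht
    (fun τ hτ => hasDerivAt_stepKernel a hτ.1)
    (fun τ _ => by positivity) (tendsto_stepKernel_nhdsGT_zero ha)
    ((hasDerivAt_stepKernel a ht).continuousAt.tendsto.mono_left nhdsWithin_le_nhds), sub_zero]
  rfl
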